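/- If μ and ν are fuzzy h-ideals of a Γ-hemiring S and x, y ∈ S, then the product ⟨x,μ⟩ × ⟨y,ν⟩, defined on S × S by (⟨x,μ⟩ × ⟨y,ν⟩)(a,b) = min(⟨x,μ⟩(a), ⟨y,ν⟩(b)), is a fuzzy h-ideal of the Γ-hemiring S × S. -/
import Mathlib


/-- A `Γ`-hemiring structure on an additive commutative monoid `S`. -/
structure GammaHemiring (S Γ : Type*) [AddCommMonoid S] [AddCommMonoid Γ] where
  mul : S → Γ → S → S
  add_mul' : ∀ (a b : S) (α : Γ) (c : S), mul (a + b) α c = mul a α c + mul b α c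
  mul_add' : ∀ (a : S) (α : Γ) (b c : S), mul a α (b + c) = mul a α b + mul a α c
  gamma_add' : ∀ (a : S) (α β : Γ) (b : S), mul a (α + β) b = mul a α b + mul a β b
  mul_assoc' : ∀ (a : S) (α : Γ) (b : S) (β : Γ) (c : S),
    mul a α (mul b β c) = mul (mul a α b) β c
  zero_mul' : ∀ (α : Γ) (a : S), mul 0 α a = 0
  mul_zero' : ∀ (α : Γ) (a : S), mul a α 0 = 0
  gamma_zero' : ∀ (a b : S), mul a (0 : Γ) b = 0

variable {S Γ : Type*} [AddCommMonoid S] [AddCommMonoid Γ]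

/-- The extension `⟨x,μ⟩(y) = inf_{s∈S, α,γ∈Γ} μ(xαsγy)`. -/
noncomputable def ext (G : GammaHemiring S Γ) (μ : S → ℝ) (x y : S) : ℝ :=
  sInf {r : ℝ | ∃ (s : S) (α γ : Γ), r = μ (G.mul x α (G.mul s γ y))}

/-- A fuzzy subset takes values in `[0,1]`. -/
def IsFuzzy (μ : S → ℝ) : Prop := ∀ y, 0 ≤ μ y ∧ μ y ≤ 1

/-- Fuzzy right h-ideal. -/
def FuzzyRightHIdeal (G : GammaHemiring S Γ) (μ : S → ℝ) : Prop :=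
  IsFuzzy μ ∧
  (∀ x y : S, min (μ x) (μ y) ≤ μ (x + y)) ∧
  (∀ x y : S, ∀ γ : Γ, μ x ≤ μ (G.mul x γ y)) ∧
  (∀ x a b z : S, x + a + z = b + z → min (μ a) (μ b) ≤ μ x)

/-- Fuzzy (two-sided) h-ideal. -/
def FuzzyHIdeal (G : GammaHemiring S Γ) (μ : S → ℝ) : Prop :=
  IsFuzzy μ ∧
  (∀ x y : S, min (μ x) (μ y) ≤ μ (x + y)) ∧
  (∀ x y : S, ∀ γ : Γ, max (μ x) (μ y) ≤ μ (G.mul x γ y)) ∧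
  (∀ x a b z : S, x + a + z = b + z → min (μ a) (μ b) ≤ μ x)

/-- The product `Γ`-hemiring `S × S` with componentwise operations. -/
def prodHemiring (G : GammaHemiring S Γ) : GammaHemiring (S × S) Γ where
  mul p γ q := (G.mul p.1 γ q.1, G.mul p.2 γ q.2)
  add_mul' a b α c := by simp [Prod.ext_iff, G.add_mul']
  mul_add' a α b c := by simp [Prod.ext_iff, G.mul_add']
  gamma_add' a α β b := by simp [Prod.ext_iff, G.gamma_add']
  mul_assoc' a α b β c := by simp [Prod.ext_iff, G.mul_assoc']
  zero_mul' α a := by simp [Prod.ext_iff, G.zero_mul']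
  mul_zero' α a := by simp [Prod.ext_iff, G.mul_zero']
  gamma_zero' a b := by simp [Prod.ext_iff, G.gamma_zero']

lemma ext_le' (G : GammaHemiring S Γ) (μ : S → ℝ) (h0 : ∀ t, 0 ≤ μ t)
    (x w s : S) (α γ : Γ) : ext G μ x w ≤ μ (G.mul x α (G.mul s γ w)) :=
  csInf_le ⟨0, by rintro r ⟨s, α, γ, rfl⟩; exact h0 _⟩ ⟨s, α, γ, rfl⟩

lemma le_ext' (G : GammaHemiring S Γ) (μ : S → ℝ) (x w : S) (c : ℝ)
    (h : ∀ s (α γ : Γ), c ≤ μ (G.mul x α (G.mul s γ w))) : c ≤ ext G μ x w :=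
  le_csInf ⟨_, w, 0, 0, rfl⟩ (by rintro r ⟨s, α, γ, rfl⟩; exact h s α γ)

lemma ext_nonneg (G : GammaHemiring S Γ) (μ : S → ℝ) (h0 : ∀ t, 0 ≤ μ t)
    (x w : S) : 0 ≤ ext G μ x w :=
  le_ext' G μ x w 0 (fun _ _ _ => h0 _)

lemma ext_le_one (G : GammaHemiring S Γ) (μ : S → ℝ) (hf : IsFuzzy μ)
    (x w : S) : ext G μ x w ≤ 1 :=
  le_trans (ext_le' G μ (fun t => (hf t).1) x w w 0 0) (hf _).2

lemma ext_add (G : GammaHemiring S Γ) (μ : S → ℝ) (hμ : FuzzyHIdeal G μ)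
    (x a b : S) : min (ext G μ x a) (ext G μ x b) ≤ ext G μ x (a + b) := by
  apply le_ext'
  intro s α γ
  rw [G.mul_add', G.mul_add']
  exact le_trans (min_le_min (ext_le' G μ (fun t => (hμ.1 t).1) x a s α γ)
    (ext_le' G μ (fun t => (hμ.1 t).1) x b s α γ)) (hμ.2.1 _ _)

lemma ext_mul (G : GammaHemiring S Γ) (μ : S → ℝ) (hμ : FuzzyHIdeal G μ)
    (x a b : S) (δ : Γ) :
    max (ext G μ x a) (ext G μ x b) ≤ ext G μ x (G.mul a δ b) := by
  apply le_ext'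
  intro s α γ
  have h0 : ∀ t, 0 ≤ μ t := fun t => (hμ.1 t).1
  rw [G.mul_assoc' s γ a δ b, G.mul_assoc' x α (G.mul s γ a) δ b]
  apply max_le
  · exact le_trans (ext_le' G μ h0 x a s α γ)
      (le_trans (le_max_left _ (μ b)) (hμ.2.2.1 _ _ _))
  · rw [← G.mul_assoc' x α (G.mul s γ a) δ b]
    exact ext_le' G μ h0 x b (G.mul s γ a) α δ

lemma ext_h (G : GammaHemiring S Γ) (μ : S → ℝ) (hμ : FuzzyHIdeal G μ)
    (x p a b z : S) (heq : p + a + z = b + z) :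
    min (ext G μ x a) (ext G μ x b) ≤ ext G μ x p := by
  apply le_ext'
  intro s α γ
  have h0 : ∀ t, 0 ≤ μ t := fun t => (hμ.1 t).1
  have hf : ∀ u v : S, G.mul x α (G.mul s γ (u + v))
      = G.mul x α (G.mul s γ u) + G.mul x α (G.mul s γ v) := by
    intro u v; rw [G.mul_add' s γ u v, G.mul_add']
  have key : G.mul x α (G.mul s γ p) + G.mul x α (G.mul s γ a)
      + G.mul x α (G.mul s γ z)
      = G.mul x α (G.mul s γ b) + G.mul x α (G.mul s γ z) := by
    rw [← hf, ← hf, ← hf, heq]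
  exact le_trans (min_le_min (ext_le' G μ h0 x a s α γ)
    (ext_le' G μ h0 x b s α γ)) (hμ.2.2.2 _ _ _ _ key)

theorem product_of_extensions_fuzzy_h_ideal (G : GammaHemiring S Γ)
    (μ ν : S → ℝ) (hμ : FuzzyHIdeal G μ) (hν : FuzzyHIdeal G ν) (x y : S) :
    FuzzyHIdeal (prodHemiring G)
      (fun p : S × S => min (ext G μ x p.1) (ext G ν y p.2)) := by
  have h0μ : ∀ t, 0 ≤ μ t := fun t => (hμ.1 t).1
  have h0ν : ∀ t, 0 ≤ ν t := fun t => (hν.1 t).1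
  refine ⟨?_, ?_, ?_, ?_⟩
  · intro p
    exact ⟨le_min (ext_nonneg G μ h0μ x p.1) (ext_nonneg G ν h0ν y p.2),
      le_trans (min_le_left _ _) (ext_le_one G μ hμ.1 x p.1)⟩
  · intro p q
    have h1 := ext_add G μ hμ x p.1 q.1
    have h2 := ext_add G ν hν y p.2 q.2
    show min _ _ ≤ min (ext G μ x (p.1 + q.1)) (ext G ν y (p.2 + q.2))
    refine le_min (le_trans ?_ h1) (le_trans ?_ h2)
    · exact min_le_min (min_le_left _ _) (min_le_left _ _)
    · exact min_le_min (min_le_right _ _) (min_le_right _ _)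
  · intro p q γ
    have h1 := ext_mul G μ hμ x p.1 q.1 γ
    have h2 := ext_mul G ν hν y p.2 q.2 γ
    show max _ _ ≤ min (ext G μ x (G.mul p.1 γ q.1)) (ext G ν y (G.mul p.2 γ q.2))
    refine le_min (le_trans ?_ h1) (le_trans ?_ h2)
    · exact max_le (le_trans (min_le_left _ _) (le_max_left _ _))
        (le_trans (min_le_left _ _) (le_max_right _ _))
    · exact max_le (le_trans (min_le_right _ _) (le_max_left _ _))
        (le_trans (min_le_right _ _) (le_max_right _ _))
  · intro p a b z heq
    have heq1 : p.1 + a.1 + z.1 = b.1 + z.1 := congrArg Prod.fst heq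
    have heq2 : p.2 + a.2 + z.2 = b.2 + z.2 := congrArg Prod.snd heq
    have h1 := ext_h G μ hμ x p.1 a.1 b.1 z.1 heq1
    have h2 := ext_h G ν hν y p.2 a.2 b.2 z.2 heq2
    refine le_min (le_trans ?_ h1) (le_trans ?_ h2)
    · exact min_le_min (min_le_left _ _) (min_le_left _ _)
    · exact min_le_min (min_le_right _ _) (min_le_right _ _)
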